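/- Let R be a Hecke symmetry on V⊗V with parameter q (i.e. R satisfies the braid relation R₁₂R₂₃R₁₂ = R₂₃R₁₂R₂₃ and (qI − R)(q⁻¹I + R) = 0, q ≠ 0, q² ≠ 1). For u ≠ v define the trigonometric current R-matrix R(u,v) := R − (u(q−q⁻¹)/(u−v))·I. Then for all pairwise distinct u, v, w ∈ ℂ the quantum Yang–Baxter equation with parameters holds: R₁₂(u,v) R₂₃(u,w) R₁₂(v,w) = R₂₃(v,w) R₁₂(u,w) R₂₃(u,v). -/
import Mathlib


/-- For an operator `X` on `V ⊗ V` (`V = ℂ^m`), the induced operator `X₁₂ = X ⊗ I`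
on `V ⊗ V ⊗ V`. -/
def amp12 {m : ℕ} (X : Matrix (Fin m × Fin m) (Fin m × Fin m) ℂ) :
    Matrix (Fin m × Fin m × Fin m) (Fin m × Fin m × Fin m) ℂ :=
  Matrix.of fun p q => X (p.1, p.2.1) (q.1, q.2.1) * (if p.2.2 = q.2.2 then 1 else 0)

/-- For an operator `X` on `V ⊗ V`, the induced operator `X₂₃ = I ⊗ X` on `V ⊗ V ⊗ V`. -/
def amp23 {m : ℕ} (X : Matrix (Fin m × Fin m) (Fin m × Fin m) ℂ) :
    Matrix (Fin m × Fin m × Fin m) (Fin m × Fin m × Fin m) ℂ :=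
  Matrix.of fun p q => (if p.1 = q.1 then 1 else 0) * X p.2 q.2

lemma amp12_one {m : ℕ} : amp12 (1 : Matrix (Fin m × Fin m) (Fin m × Fin m) ℂ) = 1 := by
  ext p r
  simp [amp12, Matrix.one_apply, Prod.ext_iff]
  aesop

lemma amp23_one {m : ℕ} : amp23 (1 : Matrix (Fin m × Fin m) (Fin m × Fin m) ℂ) = 1 := by
  ext p r
  simp [amp23, Matrix.one_apply, Prod.ext_iff]
  aesop

lemma amp12_mul {m : ℕ} (X Y : Matrix (Fin m × Fin m) (Fin m × Fin m) ℂ) :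
    amp12 (X * Y) = amp12 X * amp12 Y := by
  ext p r
  simp [amp12, Matrix.mul_apply, Fintype.sum_prod_type, Finset.mul_sum, Finset.sum_mul,
    mul_assoc, mul_comm, mul_left_comm]

lemma amp23_mul {m : ℕ} (X Y : Matrix (Fin m × Fin m) (Fin m × Fin m) ℂ) :
    amp23 (X * Y) = amp23 X * amp23 Y := by
  ext p r
  simp [amp23, Matrix.mul_apply, Fintype.sum_prod_type, Finset.mul_sum, Finset.sum_mul,
    mul_assoc, mul_comm, mul_left_comm]

lemma amp12_sub {m : ℕ} (X Y : Matrix (Fin m × Fin m) (Fin m × Fin m) ℂ) :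
    amp12 (X - Y) = amp12 X - amp12 Y := by
  ext p r; simp only [amp12, Matrix.of_apply, Matrix.sub_apply]; ring

lemma amp23_sub {m : ℕ} (X Y : Matrix (Fin m × Fin m) (Fin m × Fin m) ℂ) :
    amp23 (X - Y) = amp23 X - amp23 Y := by
  ext p r; simp only [amp23, Matrix.of_apply, Matrix.sub_apply]; ring

lemma amp12_add {m : ℕ} (X Y : Matrix (Fin m × Fin m) (Fin m × Fin m) ℂ) :
    amp12 (X + Y) = amp12 X + amp12 Y := by
  ext p r; simp only [amp12, Matrix.of_apply, Matrix.add_apply]; ring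

lemma amp23_add {m : ℕ} (X Y : Matrix (Fin m × Fin m) (Fin m × Fin m) ℂ) :
    amp23 (X + Y) = amp23 X + amp23 Y := by
  ext p r; simp only [amp23, Matrix.of_apply, Matrix.add_apply]; ring

lemma amp12_smul {m : ℕ} (s : ℂ) (X : Matrix (Fin m × Fin m) (Fin m × Fin m) ℂ) :
    amp12 (s • X) = s • amp12 X := by
  ext p r; simp [amp12, mul_assoc]

lemma amp23_smul {m : ℕ} (s : ℂ) (X : Matrix (Fin m × Fin m) (Fin m × Fin m) ℂ) :
    amp23 (s • X) = s • amp23 X := by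
  ext p r; simp [amp23]

lemma baxterization_key {M : Type*} [Ring M] [Algebra ℂ M] (A B : M) (l a b c : ℂ)
    (hb : A*B*A = B*A*B) (hA : A*A = l•A + 1) (hB : B*B = l•B + 1)
    (habc : a*b + b*c - a*c = l*b) :
    (A - a•1)*(B - b•1)*(A - c•1) = (B - c•1)*(A - b•1)*(B - a•1) := by
  simp only [sub_mul, mul_sub, smul_mul_assoc, mul_smul_comm, smul_smul, mul_one, one_mul]
  rw [hA, hB, hb]
  match_scalars <;>
    first
    | ring1
    | linear_combination habc
    | linear_combination -habc
    | linear_combination (2:ℂ)*habc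
    | linear_combination (-2:ℂ)*habc
    | linear_combination (3:ℂ)*habc
    | linear_combination (-3:ℂ)*habc

/-- If `R` is a Hecke symmetry with parameter `q`, then the trigonometric current `R`-matrix
`R(u,v) = R − (u(q−q⁻¹)/(u−v))·I` satisfies the quantum Yang–Baxter equation with parameters:
`R₁₂(u,v) R₂₃(u,w) R₁₂(v,w) = R₂₃(v,w) R₁₂(u,w) R₂₃(u,v)` for pairwise distinct `u, v, w`. -/
theorem trigonometric_current_YangBaxter (m : ℕ) (hm : 1 ≤ m)
    (R : Matrix (Fin m × Fin m) (Fin m × Fin m) ℂ)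
    (hbraid : amp12 R * amp23 R * amp12 R = amp23 R * amp12 R * amp23 R)
    (q : ℂ) (hq : q ≠ 0) (hq2 : q ^ 2 ≠ 1)
    (hHecke : (q • (1 : Matrix (Fin m × Fin m) (Fin m × Fin m) ℂ) - R) * (q⁻¹ • 1 + R) = 0)
    (u v w : ℂ) (huv : u ≠ v) (huw : u ≠ w) (hvw : v ≠ w) :
    amp12 (R - (u * (q - q⁻¹) / (u - v)) • 1) * amp23 (R - (u * (q - q⁻¹) / (u - w)) • 1) *
        amp12 (R - (v * (q - q⁻¹) / (v - w)) • 1) =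
      amp23 (R - (v * (q - q⁻¹) / (v - w)) • 1) * amp12 (R - (u * (q - q⁻¹) / (u - w)) • 1) *
        amp23 (R - (u * (q - q⁻¹) / (u - v)) • 1) := by
  set l : ℂ := q - q⁻¹ with hl
  -- The Hecke relation gives R² = l•R + 1.
  have hR2 : R * R = l • R + 1 := by
    have h := hHecke
    have hqq : q * q⁻¹ = 1 := mul_inv_cancel₀ hq
    have expand : (q • (1 : Matrix (Fin m × Fin m) (Fin m × Fin m) ℂ) - R) * (q⁻¹ • 1 + R)
        = ((q * q⁻¹) • 1 + (q - q⁻¹) • R) - R * R := by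
      simp only [sub_mul, mul_add, smul_mul_assoc, mul_smul_comm, smul_smul,
        one_mul, mul_one]
      module
    rw [expand] at h
    have h2 := (sub_eq_zero.mp h).symm
    rw [hqq, one_smul] at h2
    rw [h2, hl, add_comm]
  have hA : amp12 R * amp12 R = l • amp12 R + 1 := by
    rw [← amp12_mul, hR2, amp12_add, amp12_smul, amp12_one]
  have hB : amp23 R * amp23 R = l • amp23 R + 1 := by
    rw [← amp23_mul, hR2, amp23_add, amp23_smul, amp23_one]
  have huv' : u - v ≠ 0 := sub_ne_zero.mpr huv
  have huw' : u - w ≠ 0 := sub_ne_zero.mpr huw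
  have hvw' : v - w ≠ 0 := sub_ne_zero.mpr hvw
  have habc : (u * l / (u - v)) * (u * l / (u - w)) + (u * l / (u - w)) * (v * l / (v - w))
      - (u * l / (u - v)) * (v * l / (v - w)) = l * (u * l / (u - w)) := by
    field_simp
    ring
  have key := baxterization_key (amp12 R) (amp23 R) l
    (u * l / (u - v)) (u * l / (u - w)) (v * l / (v - w)) hbraid hA hB habc
  rw [amp12_sub, amp12_smul, amp12_one, amp23_sub, amp23_smul, amp23_one,
    amp12_sub, amp12_smul, amp12_one, amp23_sub, amp23_smul, amp23_one,
    amp12_sub, amp12_smul, amp12_one, amp23_sub, amp23_smul, amp23_one]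
  exact key
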